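/- Let ⋎ be an admissible trilinear form on ℝ⁵. Suppose e₂ is a unit vector with det(⋎_{e₂}) = 0, set e₁ := ⋎_{e₂}e₂, and let e₄ be a unit vector in the kernel of ⋎_{e₂} (⋎_{e₂}e₄ = 0). Then e₁ is a unit vector and the three vectors e₁, e₂, e₄ are pairwise orthogonal. -/
import Mathlib


noncomputable section

open Finset Matrix

/-- The linear map ⋎_v associated to a trilinear form ⋎, (⋎_v)_{ij} = ⋎_{ijk}v_k. -/
def Vmat (V : Fin 5 → Fin 5 → Fin 5 → ℝ) (v : Fin 5 → ℝ) : Matrix (Fin 5) (Fin 5) ℝ :=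
  Matrix.of fun i j => ∑ k, V i j k * v k

/-- A trilinear form ⋎ is admissible if it is totally symmetric, trace-free and
satisfies ⋎_v²v = g(v,v)·v for all v ∈ ℝ⁵. -/
def Admissible (V : Fin 5 → Fin 5 → Fin 5 → ℝ) : Prop :=
  (∀ i j k, V i j k = V j i k) ∧ (∀ i j k, V i j k = V i k j) ∧
  (∀ v : Fin 5 → ℝ, ∑ i, Vmat V v i i = 0) ∧
  (∀ v : Fin 5 → ℝ, (Vmat V v * Vmat V v).mulVec v = (∑ i, v i * v i) • v)

lemma Vmat_add (V : Fin 5 → Fin 5 → Fin 5 → ℝ) (u w : Fin 5 → ℝ) :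
    Vmat V (u + w) = Vmat V u + Vmat V w := by
  funext i j
  simp [Vmat, mul_add, Finset.sum_add_distrib]

lemma Hpt (V : Fin 5 → Fin 5 → Fin 5 → ℝ)
    (h : ∀ v : Fin 5 → ℝ, (Vmat V v * Vmat V v).mulVec v = (∑ i, v i * v i) • v) :
    ∀ (v : Fin 5 → ℝ) (i : Fin 5),
      ∑ j, Vmat V v i j * ∑ k, Vmat V v j k * v k = (∑ j, v j * v j) * v i := by
  intro v i
  have h2 := h v
  rw [← Matrix.mulVec_mulVec] at h2
  have := congrFun h2 i
  simpa [Matrix.mulVec, dotProduct] using this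

/-- Full polarization of the cubic identity ⋎_v²v = g(v,v)v. -/
lemma polar (V : Fin 5 → Fin 5 → Fin 5 → ℝ)
    (h : ∀ v : Fin 5 → ℝ, (Vmat V v * Vmat V v).mulVec v = (∑ i, v i * v i) • v)
    (u w x : Fin 5 → ℝ) (i : Fin 5) :
    (∑ j, Vmat V u i j * ∑ k, Vmat V w j k * x k) +
    (∑ j, Vmat V u i j * ∑ k, Vmat V x j k * w k) +
    (∑ j, Vmat V w i j * ∑ k, Vmat V u j k * x k) +
    (∑ j, Vmat V w i j * ∑ k, Vmat V x j k * u k) +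
    (∑ j, Vmat V x i j * ∑ k, Vmat V u j k * w k) +
    (∑ j, Vmat V x i j * ∑ k, Vmat V w j k * u k) =
    ((∑ j, u j * w j) + (∑ j, w j * u j)) * x i +
    ((∑ j, u j * x j) + (∑ j, x j * u j)) * w i +
    ((∑ j, w j * x j) + (∑ j, x j * w j)) * u i := by
  have h1 := Hpt V h (u + w + x) i
  have h2 := Hpt V h (u + w) i
  have h3 := Hpt V h (u + x) i
  have h4 := Hpt V h (w + x) i
  have h5 := Hpt V h u i
  have h6 := Hpt V h w i
  have h7 := Hpt V h x i
  simp only [Vmat_add, Matrix.add_apply, Pi.add_apply, add_mul, mul_add,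
    Finset.sum_add_distrib] at h1 h2 h3 h4
  linear_combination h1 - h2 - h3 - h4 + h5 + h6 + h7

/-- ⋎_u w = ⋎_w u (symmetry in the last two slots). -/
lemma Vmat_swap (V : Fin 5 → Fin 5 → Fin 5 → ℝ) (hs2 : ∀ i j k, V i j k = V i k j)
    (u w : Fin 5 → ℝ) (j : Fin 5) :
    ∑ k, Vmat V u j k * w k = ∑ k, Vmat V w j k * u k := by
  simp only [Vmat, Matrix.of_apply, Finset.sum_mul]
  rw [Finset.sum_comm]
  refine Finset.sum_congr rfl fun k _ => Finset.sum_congr rfl fun m _ => ?_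
  rw [hs2]; ring

/-- g(⋎_v u, w) = g(u, ⋎_v w) (symmetry in the first two slots). -/
lemma Vmat_symdot (V : Fin 5 → Fin 5 → Fin 5 → ℝ) (hs1 : ∀ i j k, V i j k = V j i k)
    (v u w : Fin 5 → ℝ) :
    ∑ j, (∑ k, Vmat V v j k * u k) * w j = ∑ j, u j * (∑ k, Vmat V v j k * w k) := by
  simp only [Vmat, Matrix.of_apply, Finset.sum_mul, Finset.mul_sum]
  rw [Finset.sum_comm]
  refine Finset.sum_congr rfl fun k _ => Finset.sum_congr rfl fun j _ => ?_
  refine Finset.sum_congr rfl fun m _ => ?_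
  rw [hs1]; ring

/-- for admissible ⋎, a unit vector e₂ with det(⋎_{e₂}) = 0,
e₁ := ⋎_{e₂}e₂, and a unit vector e₄ in the kernel of ⋎_{e₂}, the vector e₁ is unit
and e₁, e₂, e₄ are pairwise orthogonal. -/
theorem stmt10 (V : Fin 5 → Fin 5 → Fin 5 → ℝ) (hV : Admissible V)
    (e2 e4 : Fin 5 → ℝ)
    (he2 : ∑ i, e2 i * e2 i = 1)
    (hdet : (Vmat V e2).det = 0)
    (he4 : ∑ i, e4 i * e4 i = 1)
    (hker : (Vmat V e2).mulVec e4 = 0)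
    (e1 : Fin 5 → ℝ) (he1 : e1 = (Vmat V e2).mulVec e2) :
    (∑ i, e1 i * e1 i = 1) ∧
    (∑ i, e1 i * e2 i = 0) ∧
    (∑ i, e1 i * e4 i = 0) ∧
    (∑ i, e2 i * e4 i = 0) := by
  obtain ⟨hs1, hs2, _htr, hmain⟩ := hV
  -- pointwise versions of the hypotheses
  have hkerpt : ∀ j, ∑ k, Vmat V e2 j k * e4 k = 0 := by
    intro j
    have := congrFun hker j
    simpa [Matrix.mulVec, dotProduct] using this
  have he1pt : ∀ j, ∑ k, Vmat V e2 j k * e2 k = e1 j := by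
    intro j
    rw [he1]
    simp [Matrix.mulVec, dotProduct]
  -- ⋎_{e₂} e₁ = e₂  (from ⋎_{e₂}² e₂ = e₂)
  have hAe1 : ∀ j, ∑ k, Vmat V e2 j k * e1 k = e2 j := by
    intro j
    have h := Hpt V hmain e2 j
    rw [he2] at h
    simp only [he1pt] at h
    linarith [h]
  -- ⋎_{e₄} e₂ = 0
  have hB2 : ∀ j, ∑ k, Vmat V e4 j k * e2 k = 0 := by
    intro j
    rw [← Vmat_swap V hs2 e2 e4 j]
    exact hkerpt j
  -- g(e₂, e₄) = 0
  have orth24 : ∑ j, e2 j * e4 j = 0 := by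
    have h1 : ∑ j, e2 j * e4 j = ∑ j, (∑ k, Vmat V e2 j k * e1 k) * e4 j :=
      Finset.sum_congr rfl fun j _ => by rw [hAe1]
    rw [h1, Vmat_symdot V hs1 e2 e1 e4]
    simp [hkerpt]
  have orth42 : ∑ j, e4 j * e2 j = 0 := by
    rw [← orth24]
    exact Finset.sum_congr rfl fun j _ => mul_comm _ _
  -- g(e₁, e₄) = 0
  have orth14 : ∑ j, e1 j * e4 j = 0 := by
    have h1 : ∑ j, e1 j * e4 j = ∑ j, (∑ k, Vmat V e2 j k * e2 k) * e4 j :=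
      Finset.sum_congr rfl fun j _ => by rw [he1pt]
    rw [h1, Vmat_symdot V hs1 e2 e2 e4]
    simp [hkerpt]
  have orth41 : ∑ j, e4 j * e1 j = 0 := by
    rw [← orth14]
    exact Finset.sum_congr rfl fun j _ => mul_comm _ _
  -- g(e₁, e₁) = 1
  have norm1 : ∑ j, e1 j * e1 j = 1 := by
    have h1 : ∑ j, e1 j * e1 j = ∑ j, (∑ k, Vmat V e2 j k * e2 k) * e1 j :=
      Finset.sum_congr rfl fun j _ => by rw [he1pt]
    rw [h1, Vmat_symdot V hs1 e2 e2 e1]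
    have h2 : ∑ j, e2 j * (∑ k, Vmat V e2 j k * e1 k) = ∑ j, e2 j * e2 j :=
      Finset.sum_congr rfl fun j _ => by rw [hAe1]
    rw [h2, he2]
  -- ⋎_{e₄} e₁ = e₄  (first polarization: u = w = e₂, x = e₄)
  have hBe1 : ∀ i, ∑ j, Vmat V e4 i j * e1 j = e4 i := by
    intro i
    have hp := polar V hmain e2 e2 e4 i
    simp only [hkerpt, hB2, he1pt, mul_zero, Finset.sum_const_zero, add_zero, zero_add,
      he2, orth24, orth42] at hp
    linarith [hp]
  -- ⋎_{e₁} e₄ = e₄, ⋎_{e₁} e₂ = e₂ (via swapping)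
  have h14 : ∀ j, ∑ k, Vmat V e1 j k * e4 k = e4 j := by
    intro j
    rw [Vmat_swap V hs2 e1 e4 j]
    exact hBe1 j
  have h12 : ∀ j, ∑ k, Vmat V e1 j k * e2 k = e2 j := by
    intro j
    rw [Vmat_swap V hs2 e1 e2 j]
    exact hAe1 j
  -- second polarization: u = e₂, w = e₄, x = e₁ gives g(e₁,e₂)·e₄ = 0
  have key : ∀ i, (∑ j, e2 j * e1 j + ∑ j, e1 j * e2 j) * e4 i = 0 := by
    intro i
    have hp := polar V hmain e2 e4 e1 i
    simp only [hkerpt, hB2, he1pt, hAe1, hBe1, h14, h12, mul_zero, Finset.sum_const_zero,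
      add_zero, zero_add, orth24, orth42, orth14, orth41] at hp
    linarith [hp]
  have ex4 : ∃ i, e4 i ≠ 0 := by
    by_contra h
    push_neg at h
    simp [h] at he4
  obtain ⟨i0, hi0⟩ := ex4
  have orth12 : ∑ j, e1 j * e2 j = 0 := by
    have hk := key i0
    have hc : ∑ j, e2 j * e1 j = ∑ j, e1 j * e2 j :=
      Finset.sum_congr rfl fun j _ => mul_comm _ _
    rw [hc] at hk
    have := mul_eq_zero.mp hk
    rcases this with h | h
    · linarith [h]
    · exact absurd h hi0
  exact ⟨norm1, orth12, orth14, orth24⟩
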